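/- arXiv:1802.01054 — 3 statements merged into one kernel-verified Lean document; each statement's English description precedes it below -/
import Mathlib

section
/- Suppose the graph is strongly connected and the intervals are pairwise disjoint with p_1 < p_2 < … < p_n (hence q_1 < … < q_n). Then along any solution, lim sup_{t→∞} max_i x_i(t) ≤ p_n and lim inf_{t→∞} min_i x_i(t) ≥ q_1; in particular every trajectory converges to the set [q_1, p_n]^n. -/
open Finset Filter

/-- Saturation of `z` onto the interval `[p, q]`. -/
noncomputable def sat (p q z : ℝ) : ℝ := max p (min z q)

/-!
The top node `N` is the only one whose saturated output can exceed `P = p_N`, and only by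
exceeding its own state. So whenever `x_N ≥ P`, its in-neighbours other than itself pull it down
exponentially fast, and `x_N` eventually stays below `P + ε`. From then on every output is at most
`P + ε`, and each `x_i` is pulled below `P + 2ε` by the same scalar comparison. The lower bound
is the upper bound for `-x` with the negated saturations, node `0` playing the role of `N`.
-/

open Real Topology

theorem eventually_le_add_of_hasDerivAt_le_mul_sub {y y' : ℝ → ℝ}
    (hy : ∀ t, HasDerivAt y (y' t) t) {K c t₀ : ℝ} (hK : 0 < K)
    (hbound : ∀ t ≥ t₀, c < y t → y' t ≤ K * (c - y t)) {η : ℝ} (hη : 0 < η) :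
    ∀ᶠ t in atTop, y t ≤ c + η := by
  set D := |y t₀ - c|
  set B : ℝ → ℝ := fun t => c + η / 2 + D * exp (-K * (t - t₀))
  have hB : ∀ t, HasDerivAt B (D * (exp (-K * (t - t₀)) * (-K * 1))) t := fun t =>
    ((((hasDerivAt_id t).sub_const t₀).const_mul (-K)).exp.const_mul D).const_add (c + η / 2)
  have hyB : ∀ t ≥ t₀, y t ≤ B t := by
    intro t ht
    refine image_le_of_deriv_right_lt_deriv_boundary'
      (fun s _ => (hy s).continuousAt.continuousWithinAt)
      (fun s _ => (hy s).hasDerivWithinAt) ?_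
      (fun s _ => (hB s).continuousAt.continuousWithinAt)
      (fun s _ => (hB s).hasDerivWithinAt) ?_ ⟨ht, le_rfl⟩
    · simp only [B, sub_self, mul_zero, exp_zero, mul_one]
      linarith [le_abs_self (y t₀ - c)]
    · rintro s ⟨hs, -⟩ hys
      have hDe : 0 ≤ D * exp (-K * (s - t₀)) := by positivity
      have := hbound s hs (by simp only [hys, B]; linarith)
      simp only [hys, B] at this
      nlinarith
  have hexp : Tendsto (fun t => exp (-K * (t - t₀))) atTop (𝓝 0) :=
    tendsto_exp_atBot.comp <|
      (tendsto_atTop_add_const_right _ (-t₀) tendsto_id).const_mul_atTop_of_neg (neg_lt_zero.2 hK)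
  have hlim : Tendsto B atTop (𝓝 (c + η / 2 + D * 0)) :=
    tendsto_const_nhds.add (tendsto_const_nhds.mul hexp)
  rw [mul_zero, add_zero] at hlim
  have hη2 : c + η / 2 < c + η := by linarith
  filter_upwards [eventually_ge_atTop t₀, hlim.eventually (gt_mem_nhds hη2)] with t ht hBt
  exact (hyB t ht).trans hBt.le

theorem Relation.ReflTransGen.exists_ne_rel_of_ne {α : Type*} {r : α → α → Prop} {i j : α}
    (h : Relation.ReflTransGen r i j) (hij : i ≠ j) : ∃ u ≠ j, r u j := by
  induction h with
  | refl => exact absurd rfl hij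
  | @tail b c _ hbc ih =>
    by_cases hb : b = c
    · subst hb
      exact ih hij
    · exact ⟨b, hb, hbc⟩

theorem min_le_sat (p q z : ℝ) : min z q ≤ sat p q z := le_max_right _ _

theorem left_le_sat (p q z : ℝ) : p ≤ sat p q z := le_max_left _ _

theorem sat_le_max (p q z : ℝ) : sat p q z ≤ max p z := max_le_max le_rfl (min_le_left _ _)

theorem sat_le_right {p q : ℝ} (h : p ≤ q) (z : ℝ) : sat p q z ≤ q := max_le h (min_le_right _ _)

section Network

variable {ι : Type*} [Fintype ι]

def drift (a : ι → ι → ℝ) (φ : ι → ℝ → ℝ) (y : ι → ℝ) (i : ι) : ℝ :=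
  ∑ j, a i j * (φ j (y j) - y i)

def IsTrajectory (a : ι → ι → ℝ) (φ : ι → ℝ → ℝ) (x : ℝ → ι → ℝ) : Prop :=
  ∀ i t, HasDerivAt (fun s => x s i) (drift a φ (x t) i) t

variable {a : ι → ι → ℝ} {φ : ι → ℝ → ℝ}

theorem IsTrajectory.neg {x : ℝ → ι → ℝ} (hx : IsTrajectory a φ x) :
    IsTrajectory a (fun j z => -φ j (-z)) (-x) := by
  intro i t
  refine (hx i t).neg.congr_deriv ?_
  simp only [drift, Pi.neg_apply, neg_neg, ← sum_neg_distrib]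
  exact sum_congr rfl fun j _ => by ring

theorem drift_le_of_forall_le (ha : ∀ i j, 0 ≤ a i j) {y : ι → ℝ} {c : ℝ}
    (h : ∀ j, φ j (y j) ≤ c) (i : ι) : drift a φ y i ≤ (∑ j, a i j) * (c - y i) := by
  rw [drift, sum_mul]
  exact sum_le_sum fun j _ => mul_le_mul_of_nonneg_left (by linarith [h j]) (ha i j)

theorem drift_le_offDiag_mul_sub [DecidableEq ι] (ha : ∀ i j, 0 ≤ a i j) {N : ι} {P : ℝ}
    (hφ : ∀ j ≠ N, ∀ z, φ j z ≤ P) (hφN : ∀ z, φ N z ≤ max P z) {y : ι → ℝ} (hy : P ≤ y N) :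
    drift a φ y N ≤ (∑ j ∈ univ.erase N, a N j) * (P - y N) := by
  have hself : a N N * (φ N (y N) - y N) ≤ 0 :=
    mul_nonpos_of_nonneg_of_nonpos (ha N N) (by linarith [max_eq_right hy ▸ hφN (y N)])
  have hothers : ∑ j ∈ univ.erase N, a N j * (φ j (y j) - y N) ≤
      ∑ j ∈ univ.erase N, a N j * (P - y N) :=
    sum_le_sum fun j hj =>
      mul_le_mul_of_nonneg_left (by linarith [hφ j (ne_of_mem_erase hj) (y j)]) (ha N j)
  rw [drift, ← add_sum_erase _ _ (mem_univ N), sum_mul]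
  linarith

theorem IsTrajectory.eventually_le_add {x : ℝ → ι → ℝ} (hx : IsTrajectory a φ x)
    (ha : ∀ i j, 0 ≤ a i j) (hin : ∀ i, ∃ j ≠ i, 0 < a i j) {N : ι} {P : ℝ}
    (hφ : ∀ j ≠ N, ∀ z, φ j z ≤ P) (hφN : ∀ z, φ N z ≤ max P z) {ε : ℝ} (hε : 0 < ε) :
    ∀ᶠ t in atTop, ∀ i, x t i ≤ P + ε := by
  classical
  have hA : ∀ i, 0 < ∑ j, a i j := fun i =>
    let ⟨j, _, hj⟩ := hin i
    hj.trans_le (single_le_sum (fun k _ => ha i k) (mem_univ j))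
  obtain ⟨j, hjN, hj⟩ := hin N
  have hB : 0 < ∑ k ∈ univ.erase N, a N k :=
    hj.trans_le (single_le_sum (fun k _ => ha N k) (mem_erase.2 ⟨hjN, mem_univ j⟩))
  obtain ⟨t₁, ht₁⟩ := eventually_atTop.1 <| eventually_le_add_of_hasDerivAt_le_mul_sub (hx N) hB
    (t₀ := 0) (fun t _ hP => drift_le_offDiag_mul_sub ha hφ hφN hP.le) (half_pos hε)
  have hφ_le : ∀ t ≥ t₁, ∀ j, φ j (x t j) ≤ P + ε / 2 := by
    intro t ht j
    by_cases hj : j = N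
    · subst hj
      exact (hφN _).trans (max_le (by linarith) (ht₁ t ht))
    · linarith [hφ j hj (x t j)]
  refine eventually_all.2 fun i => ?_
  simpa only [add_assoc, add_halves] using eventually_le_add_of_hasDerivAt_le_mul_sub (hx i) (hA i)
    (fun t ht _ => drift_le_of_forall_le ha (hφ_le t ht) i) (half_pos hε)

end Network

theorem trajectories_converge_to_middle_cube_general
    (n : ℕ) (hn : 1 ≤ n)
    (a : Fin (n + 1) → Fin (n + 1) → ℝ) (ha : ∀ i j, 0 ≤ a i j)
    (hSC : ∀ i j : Fin (n + 1), Relation.ReflTransGen (fun u v => 0 < a v u) i j)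
    (p q : Fin (n + 1) → ℝ) (hpq : ∀ m, p m ≤ q m)
    (hdisj : ∀ i j : Fin (n + 1), i < j → q i < p j)
    (x : ℝ → Fin (n + 1) → ℝ)
    (hx : ∀ i t, HasDerivAt (fun s => x s i)
      (∑ j, a i j * (sat (p j) (q j) (x t j) - x t i)) t) :
    ∀ ε > (0 : ℝ), ∀ᶠ t in atTop,
      (∀ i, x t i ≤ p (Fin.last n) + ε) ∧ (∀ i, q 0 - ε ≤ x t i) := by
  intro ε hε
  have htraj : IsTrajectory a (fun j => sat (p j) (q j)) x := hx
  have hin : ∀ i, ∃ j ≠ i, 0 < a i j := fun i =>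
    have : Nontrivial (Fin (n + 1)) := Fin.nontrivial_iff_two_le.2 (by omega)
    let ⟨k, hk⟩ := exists_ne i
    (hSC k i).exists_ne_rel_of_ne hk
  have hupper := htraj.eventually_le_add ha hin (N := Fin.last n)
    (fun j hj z => (sat_le_right (hpq j) z).trans (hdisj j _ (Fin.lt_last_iff_ne_last.2 hj)).le)
    (fun z => sat_le_max _ _ z) hε
  have hlower := htraj.neg.eventually_le_add ha hin (N := 0) (P := -q 0)
    (fun j hj z => neg_le_neg ((hdisj 0 j (Fin.pos_iff_ne_zero.2 hj)).le.trans (left_le_sat _ _ _)))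
    (fun z => (neg_le_neg (min_le_sat _ _ (-z))).trans_eq
      (by rw [← max_neg_neg, neg_neg, max_comm])) hε
  filter_upwards [hupper, hlower] with t hup hlow
  exact ⟨hup, fun i => by linarith [show -x t i ≤ -q 0 + ε from hlow i]⟩

/-- With strongly connected graph and pairwise disjoint ordered intervals
(`q i < p j` for `i < j`), every trajectory converges to the set `[q_1, p_n]^n`:
eventually all states are below `p_n + ε` and above `q_1 - ε`. -/
theorem trajectories_converge_to_middle_cube
    (n : ℕ) (hn : 1 ≤ n)
    (a : Fin (n + 1) → Fin (n + 1) → ℝ) (ha : ∀ i j, 0 ≤ a i j)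
    (hSC : ∀ i j : Fin (n + 1), Relation.ReflTransGen (fun u v => 0 < a v u) i j)
    (p q : Fin (n + 1) → ℝ) (hpq : ∀ m, p m ≤ q m)
    (hpmono : StrictMono p) (hqmono : StrictMono q)
    (hdisj : ∀ i j : Fin (n + 1), i < j → q i < p j)
    (x : ℝ → Fin (n + 1) → ℝ)
    (hx : ∀ i t, HasDerivAt (fun s => x s i)
      (∑ j, a i j * (sat (p j) (q j) (x t j) - x t i)) t) :
    ∀ ε > (0 : ℝ), ∀ᶠ t in atTop,
      (∀ i, x t i ≤ p (Fin.last n) + ε) ∧ (∀ i, q 0 - ε ≤ x t i) :=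
  trajectories_converge_to_middle_cube_general n hn a ha hSC p q hpq hdisj x hx
end

section
/- For the two-node interval consensus dx_1/dt = a(ψ_2(x_2) − x_1), dx_2/dt = b(ψ_1(x_1) − x_2) with a, b > 0 and disjoint intervals q_1 < p_2, the unique equilibrium is (e_1, e_2) = (p_2, q_1), and it is globally asymptotically stable. -/
/-!
Along `ẏ = k (u - y)` with `k > 0` the quantity `(y - c) e^{k t}` has derivative
`k e^{k t} (u - c)`, so it is monotone while `u ≥ c` (or `u ≤ c`): `y` stays on the correct
side of an envelope `c + (y T - c) e^{k (T - t)}` that relaxes to `c`.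
Since `ψ₂ ≥ p₂ > q₁`, the state `x₁` eventually exceeds `q₁`; from then on `x₂` receives
the constant input `ψ₁(x₁) = q₁`, hence `x₂ → q₁ < p₂`; from then on `x₁` receives the
constant input `ψ₂(x₂) = p₂`, hence `x₁ → p₂`.
-/

open Finset Filter

open Real Topology

section Saturation

variable {p q z : ℝ}

lemma le_sat : p ≤ sat p q z := le_max_left _ _

lemma sat_of_le_left (hz : z ≤ p) : sat p q z = p :=
  max_eq_left ((min_le_left _ _).trans hz)

lemma sat_of_le_right (hpq : p ≤ q) (hz : q ≤ z) : sat p q z = q := by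
  rw [sat, min_eq_right hz, max_eq_right hpq]

end Saturation

lemma sat_pair_fixed_iff {p₁ q₁ p₂ q₂ e₁ e₂ : ℝ} (h₁ : p₁ ≤ q₁) (h₁₂ : q₁ < p₂) :
    (sat p₂ q₂ e₂ = e₁ ∧ sat p₁ q₁ e₁ = e₂) ↔ (e₁ = p₂ ∧ e₂ = q₁) := by
  constructor
  · rintro ⟨he₁, he₂⟩
    have hq₁e₁ : q₁ ≤ e₁ := h₁₂.le.trans (he₁ ▸ le_sat)
    have he₂q₁ : e₂ = q₁ := he₂ ▸ sat_of_le_right h₁ hq₁e₁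
    exact ⟨he₁ ▸ he₂q₁ ▸ sat_of_le_left h₁₂.le, he₂q₁⟩
  · rintro ⟨rfl, rfl⟩
    exact ⟨sat_of_le_left h₁₂.le, sat_of_le_right h₁ h₁₂.le⟩

section Relaxation

variable {k c T : ℝ} {y u : ℝ → ℝ}

lemma hasDerivAt_sub_mul_exp {t : ℝ} (hy : HasDerivAt y (k * (u t - y t)) t) :
    HasDerivAt (fun t ↦ (y t - c) * exp (k * t)) (exp (k * t) * (k * (u t - c))) t := by
  have hexp : HasDerivAt (fun t ↦ exp (k * t)) (exp (k * t) * k) t := by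
    simpa using ((hasDerivAt_id t).const_mul k).exp
  exact ((hy.sub_const c).mul hexp).congr_deriv (by ring)

lemma envelope_le_of_relaxation (hk : 0 ≤ k) (hy : ∀ t, HasDerivAt y (k * (u t - y t)) t)
    (hu : ∀ t ≥ T, c ≤ u t) {t : ℝ} (ht : T ≤ t) :
    c + (y T - c) * exp (k * (T - t)) ≤ y t := by
  set g : ℝ → ℝ := fun t ↦ (y t - c) * exp (k * t)
  have hg : ∀ t, HasDerivAt g (exp (k * t) * (k * (u t - c))) t :=
    fun t ↦ hasDerivAt_sub_mul_exp (hy t)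
  have hmono : MonotoneOn g (Set.Ici T) := by
    refine monotoneOn_of_hasDerivWithinAt_nonneg (convex_Ici T)
      (fun t _ ↦ (hg t).continuousAt.continuousWithinAt) (fun t _ ↦ (hg t).hasDerivWithinAt)
      fun t ht ↦ ?_
    rw [interior_Ici] at ht
    have : 0 ≤ u t - c := sub_nonneg.mpr (hu t (le_of_lt ht))
    positivity
  have hgT : g T ≤ g t := hmono Set.self_mem_Ici ht ht
  have hrescale : (y T - c) * exp (k * (T - t)) * exp (k * t) = g T := by
    simp only [g, mul_assoc, ← exp_add]
    ring_nf
  have : (y T - c) * exp (k * (T - t)) ≤ y t - c :=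
    le_of_mul_le_mul_right (hrescale ▸ hgT) (exp_pos _)
  linarith

lemma le_envelope_of_relaxation (hk : 0 ≤ k) (hy : ∀ t, HasDerivAt y (k * (u t - y t)) t)
    (hu : ∀ t ≥ T, u t ≤ c) {t : ℝ} (ht : T ≤ t) :
    y t ≤ c + (y T - c) * exp (k * (T - t)) := by
  have hneg : ∀ t, HasDerivAt (-y) (k * (-u t - (-y) t)) t :=
    fun t ↦ ((hy t).neg).congr_deriv (by simp only [Pi.neg_apply]; ring)
  have := envelope_le_of_relaxation (c := -c) hk hneg (fun t ht ↦ neg_le_neg (hu t ht)) ht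
  simp only [Pi.neg_apply] at this
  linarith

lemma tendsto_envelope (hk : 0 < k) (c T y₀ : ℝ) :
    Tendsto (fun t ↦ c + y₀ * exp (k * (T - t))) atTop (𝓝 c) := by
  have hexponent : Tendsto (fun t ↦ k * (T - t)) atTop atBot :=
    (tendsto_atBot_add_const_left _ T tendsto_neg_atTop_atBot).const_mul_atBot hk
  simpa using ((tendsto_exp_atBot.comp hexponent).const_mul y₀).const_add c

lemma tendsto_of_relaxation (hk : 0 < k) (hy : ∀ t, HasDerivAt y (k * (u t - y t)) t)
    (hu : ∀ᶠ t in atTop, u t = c) : Tendsto y atTop (𝓝 c) := by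
  obtain ⟨T, hT⟩ := eventually_atTop.mp hu
  refine tendsto_of_tendsto_of_tendsto_of_le_of_le' (tendsto_envelope hk c T (y T - c))
    (tendsto_envelope hk c T (y T - c)) ?_ ?_
  · filter_upwards [eventually_ge_atTop T] with t ht
    exact envelope_le_of_relaxation hk.le hy (fun t ht ↦ (hT t ht).ge) ht
  · filter_upwards [eventually_ge_atTop T] with t ht
    exact le_envelope_of_relaxation hk.le hy (fun t ht ↦ (hT t ht).le) ht

lemma eventually_lt_of_relaxation {d : ℝ} (hk : 0 < k)
    (hy : ∀ t, HasDerivAt y (k * (u t - y t)) t) (hu : ∀ᶠ t in atTop, c ≤ u t) (hd : d < c) :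
    ∀ᶠ t in atTop, d < y t := by
  obtain ⟨T, hT⟩ := eventually_atTop.mp hu
  filter_upwards [(tendsto_envelope hk c T (y T - c)).eventually_const_lt hd,
    eventually_ge_atTop T] with t hdt ht
  exact hdt.trans_le (envelope_le_of_relaxation hk.le hy hT ht)

end Relaxation

theorem two_node_unique_globally_stable_equilibrium_general
    (a b : ℝ) (hb : 0 < a) (hb' : 0 < b)
    (p₁ q₁ p₂ q₂ : ℝ) (h₁ : p₁ ≤ q₁) (h₁₂ : q₁ < p₂) :
    (∀ e₁ e₂ : ℝ,
      (a * (sat p₂ q₂ e₂ - e₁) = 0 ∧ b * (sat p₁ q₁ e₁ - e₂) = 0) ↔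
      (e₁ = p₂ ∧ e₂ = q₁)) ∧
    (∀ x₁ x₂ : ℝ → ℝ,
      (∀ t, HasDerivAt x₁ (a * (sat p₂ q₂ (x₂ t) - x₁ t)) t) →
      (∀ t, HasDerivAt x₂ (b * (sat p₁ q₁ (x₁ t) - x₂ t)) t) →
      Tendsto x₁ atTop (nhds p₂) ∧ Tendsto x₂ atTop (nhds q₁)) := by
  refine ⟨fun e₁ e₂ ↦ ?_, fun x₁ x₂ hx₁ hx₂ ↦ ?_⟩
  · simp only [mul_eq_zero, hb.ne', hb'.ne', false_or, sub_eq_zero]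
    exact sat_pair_fixed_iff h₁ h₁₂
  have hx₁_gt : ∀ᶠ t in atTop, q₁ < x₁ t :=
    eventually_lt_of_relaxation hb hx₁ (Eventually.of_forall fun _ ↦ le_sat) h₁₂
  have hx₂_lim : Tendsto x₂ atTop (𝓝 q₁) :=
    tendsto_of_relaxation hb' hx₂ (hx₁_gt.mono fun _ ht ↦ sat_of_le_right h₁ ht.le)
  have hx₂_lt : ∀ᶠ t in atTop, x₂ t < p₂ := hx₂_lim.eventually_lt_const h₁₂
  exact ⟨tendsto_of_relaxation hb hx₁ (hx₂_lt.mono fun _ ht ↦ sat_of_le_left ht.le), hx₂_lim⟩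

/-- Two-node interval consensus with disjoint intervals `q₁ < p₂`: the unique
equilibrium is `(e₁, e₂) = (p₂, q₁)`, and it is globally asymptotically
stable (every solution converges to it). -/
theorem two_node_unique_globally_stable_equilibrium
    (a b : ℝ) (hb : 0 < a) (hb' : 0 < b)
    (p₁ q₁ p₂ q₂ : ℝ) (h₁ : p₁ ≤ q₁) (h₁₂ : q₁ < p₂) (h₂ : p₂ ≤ q₂) :
    (∀ e₁ e₂ : ℝ,
      (a * (sat p₂ q₂ e₂ - e₁) = 0 ∧ b * (sat p₁ q₁ e₁ - e₂) = 0) ↔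
      (e₁ = p₂ ∧ e₂ = q₁)) ∧
    (∀ x₁ x₂ : ℝ → ℝ,
      (∀ t, HasDerivAt x₁ (a * (sat p₂ q₂ (x₂ t) - x₁ t)) t) →
      (∀ t, HasDerivAt x₂ (b * (sat p₁ q₁ (x₁ t) - x₂ t)) t) →
      Tendsto x₁ atTop (nhds p₂) ∧ Tendsto x₂ atTop (nhds q₁)) :=
  two_node_unique_globally_stable_equilibrium_general a b hb hb' p₁ q₁ p₂ q₂ h₁ h₁₂
end

section
/- Along the interval consensus dynamics with nonempty interval intersection, if at some time t* the value H(x(t*)) = max{max_i x_i(t*), q_*} equals q_*, then H(x(t)) = q_* for all t ≥ t*; i.e., the sublevel set {x : max_i x_i ≤ q_*} is positively invariant. -/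
open Finset Filter
open scoped Topology

theorem sat_le {p q z m : ℝ} (hp : p ≤ m) (hz : z ≤ m) : sat p q z ≤ m :=
  max_le hp ((min_le_left z q).trans hz)

theorem sum_mul_sat_sub_nonpos {ι : Type*} [Fintype ι] {a p q y : ι → ℝ} {m : ℝ}
    (ha : ∀ j, 0 ≤ a j) (hp : ∀ j, p j ≤ m) (hy : ∀ j, y j ≤ m) :
    ∑ j, a j * (sat (p j) (q j) (y j) - m) ≤ 0 :=
  sum_nonpos fun j _ => mul_nonpos_of_nonneg_of_nonpos (ha j) (sub_nonpos.2 (sat_le (hp j) (hy j)))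

theorem frequently_slope_max_const_lt {f : ℝ → ℝ} {t c r : ℝ}
    (hf : ContinuousWithinAt f (Set.Ioi t) t) (hr : 0 < r)
    (hslope : c ≤ f t → ∃ᶠ z in 𝓝[>] t, slope f t z < r) :
    ∃ᶠ z in 𝓝[>] t, slope (fun z => max (f z) c) t z < r := by
  rcases lt_or_ge (f t) c with hlt | hge
  · have hconst : ∀ᶠ z in 𝓝[>] t, f z < c := hf.eventually (gt_mem_nhds hlt)
    refine (hconst.mono fun z hz => ?_).frequently
    simp [slope_def_field, max_eq_right hz.le, max_eq_right hlt.le, hr]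
  · refine ((hslope hge).and_eventually self_mem_nhdsWithin).mono fun z ⟨hz, htz⟩ => ?_
    have hpos : 0 < z - t := sub_pos.2 htz
    rw [slope_def_field, div_lt_iff₀ hpos] at hz
    rw [slope_def_field, max_eq_left hge, div_lt_iff₀ hpos]
    rcases le_total c (f z) with h | h
    · rwa [max_eq_left h]
    · rw [max_eq_right h]
      nlinarith

theorem image_le_of_liminf_slope_right_nonpos_of_ge {f : ℝ → ℝ} {a b c : ℝ}
    (hf : ContinuousOn f (Set.Icc a b)) (ha : f a ≤ c)
    (bound : ∀ t ∈ Set.Ico a b, c ≤ f t → ∀ r > 0, ∃ᶠ z in 𝓝[>] t, slope f t z < r) :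
    ∀ ⦃t⦄, t ∈ Set.Icc a b → f t ≤ c := by
  have hmax : ∀ ⦃t⦄, t ∈ Set.Icc a b → max (f t) c ≤ c :=
    image_le_of_liminf_slope_right_le_deriv_boundary (hf.sup continuousOn_const)
      (max_le ha le_rfl) continuousOn_const (fun t _ => hasDerivWithinAt_const t _ c)
      fun t ht r hr => frequently_slope_max_const_lt
        ((hf t (Set.Ico_subset_Icc_self ht)).mono_of_mem_nhdsWithin
          (Icc_mem_nhdsGT_of_mem ht)) hr
        fun hge => bound t ht hge r hr
  exact fun t ht => (le_max_left _ _).trans (hmax ht)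

theorem Finset.exists_frequently_sup'_apply_eq {ι α β : Type*} [LinearOrder β] {s : Finset ι}
    (hs : s.Nonempty) {g : ι → α → β} {l : Filter α} [l.NeBot] :
    ∃ i ∈ s, ∃ᶠ z in l, s.sup' hs (g · z) = g i z := by
  by_contra! h
  obtain ⟨z, hz⟩ := ((eventually_all_finset s).2 h).exists
  obtain ⟨i, hi, heq⟩ := s.exists_mem_eq_sup' hs (g · z)
  exact hz i hi heq

section Envelope

variable {ι : Type*} {s : Finset ι} {g : ι → ℝ → ℝ}

/-- The upper envelope of finitely many differentiable functions has, at every point, right lower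
Dini derivative at most the derivative of some function that is maximal there. -/
theorem Finset.exists_frequently_slope_sup'_lt (hs : s.Nonempty) {g' : ι → ℝ} {t : ℝ}
    (hg : ∀ i ∈ s, HasDerivAt (g i) (g' i) t) :
    ∃ i ∈ s, g i t = s.sup' hs (g · t) ∧
      ∀ r, g' i < r → ∃ᶠ z in 𝓝[>] t, slope (fun z => s.sup' hs (g · z)) t z < r := by
  obtain ⟨i, hi, hfreq⟩ := s.exists_frequently_sup'_apply_eq hs (g := g) (l := 𝓝[>] t)
  have hsup : ContinuousAt (fun z => s.sup' hs (g · z)) t :=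
    ContinuousAt.finset_sup'_apply hs fun j hj => (hg j hj).continuousAt
  have hmax : g i t = s.sup' hs (g · t) :=
    tendsto_nhds_unique_of_frequently_eq ((hg i hi).continuousAt.tendsto.mono_left
      nhdsWithin_le_nhds) (hsup.tendsto.mono_left nhdsWithin_le_nhds) (hfreq.mono fun _ h => h.symm)
  refine ⟨i, hi, hmax, fun r hr => ?_⟩
  have hslope : ∀ᶠ z in 𝓝[>] t, slope (g i) t z < r :=
    ((hasDerivAt_iff_tendsto_slope.1 (hg i hi)).eventually (gt_mem_nhds hr)).filter_mono
      (nhdsWithin_mono t fun _ hz => ne_of_gt hz)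
  refine (hfreq.and_eventually hslope).mono fun z ⟨heq, hlt⟩ => ?_
  rwa [slope_def_field, heq, ← hmax, ← slope_def_field]

theorem Finset.le_of_hasDerivAt_nonpos_at_max (hs : s.Nonempty) {g' : ι → ℝ → ℝ} {a b c : ℝ}
    (hg : ∀ i ∈ s, ∀ t ∈ Set.Icc a b, HasDerivAt (g i) (g' i t) t)
    (hmax : ∀ t ∈ Set.Ico a b, ∀ i ∈ s, g i t = s.sup' hs (g · t) → c ≤ g i t → g' i t ≤ 0)
    (ha : ∀ i ∈ s, g i a ≤ c) : ∀ t ∈ Set.Icc a b, ∀ i ∈ s, g i t ≤ c := by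
  have hsup : ∀ t ∈ Set.Icc a b, s.sup' hs (g · t) ≤ c :=
    image_le_of_liminf_slope_right_nonpos_of_ge
      (fun t ht => (ContinuousAt.finset_sup'_apply hs fun i hi =>
        (hg i hi t ht).continuousAt).continuousWithinAt)
      (s.sup'_le hs _ ha) fun t ht hge r hr => by
        obtain ⟨i, hi, hieq, hslope⟩ :=
          s.exists_frequently_slope_sup'_lt hs fun i hi =>
            hg i hi t (Set.Ico_subset_Icc_self ht)
        exact hslope r ((hmax t ht i hi hieq (hieq ▸ hge)).trans_lt hr)
  exact fun t ht i hi => (s.le_sup' (g · t) hi).trans (hsup t ht)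

end Envelope

theorem sublevel_set_positively_invariant_general
    (n : ℕ) (a : Fin (n + 1) → Fin (n + 1) → ℝ) (ha : ∀ i j, 0 ≤ a i j)
    (p q : Fin (n + 1) → ℝ)
    (pstar qstar : ℝ)
    (hpstar : pstar = Finset.univ.sup' Finset.univ_nonempty p)
    (hinter : pstar ≤ qstar)
    (x : ℝ → Fin (n + 1) → ℝ)
    (hx : ∀ i t, HasDerivAt (fun s => x s i)
      (∑ j, a i j * (sat (p j) (q j) (x t j) - x t i)) t)
    (tstar : ℝ)
    (hstar : ∀ i, x tstar i ≤ qstar) :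
    ∀ t ≥ tstar, ∀ i, x t i ≤ qstar := by
  have hp : ∀ j, p j ≤ qstar := fun j =>
    ((univ.le_sup' p (mem_univ j)).trans_eq hpstar.symm).trans hinter
  intro t ht i
  refine univ.le_of_hasDerivAt_nonpos_at_max univ_nonempty (g := fun i s => x s i)
    (fun i _ s _ => hx i s) (fun s _ k _ hkmax hk => ?_) (fun i _ => hstar i) t ⟨ht, le_rfl⟩ i
    (mem_univ i)
  exact sum_mul_sat_sub_nonpos (ha k) (fun j => (hp j).trans hk)
    fun j => hkmax ▸ univ.le_sup' (fun j => x s j) (mem_univ j)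

/-- With nonempty interval intersection, if at some time `t*` all states are at
most `q_* = min_i q_i` (i.e. `H(x(t*)) = q_*`), then they remain at most `q_*`
for all later times: the sublevel set `{x : max_i x_i ≤ q_*}` is positively
invariant. -/
theorem sublevel_set_positively_invariant
    (n : ℕ) (a : Fin (n + 1) → Fin (n + 1) → ℝ) (ha : ∀ i j, 0 ≤ a i j)
    (p q : Fin (n + 1) → ℝ) (hpq : ∀ m, p m ≤ q m)
    (pstar qstar : ℝ)
    (hpstar : pstar = Finset.univ.sup' Finset.univ_nonempty p)
    (hqstar : qstar = Finset.univ.inf' Finset.univ_nonempty q)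
    (hinter : pstar ≤ qstar)
    (x : ℝ → Fin (n + 1) → ℝ)
    (hx : ∀ i t, HasDerivAt (fun s => x s i)
      (∑ j, a i j * (sat (p j) (q j) (x t j) - x t i)) t)
    (tstar : ℝ) (htstar : 0 ≤ tstar)
    (hstar : ∀ i, x tstar i ≤ qstar) :
    ∀ t ≥ tstar, ∀ i, x t i ≤ qstar :=
  sublevel_set_positively_invariant_general n a ha p q pstar qstar hpstar hinter x hx tstar hstar
end
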